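/- Expected one-step entropy change formula: with P^n a density on X with CDF F^n, points x_l < x_r, probabilities g = g^n(x_l,x_r) and gbar = gbar^n(x_l,x_r) in (0,1), and U_1, U_0 the normalizers, the expected posterior entropy minus prior entropy equals [g log2 g + (1-g) log2(1-g)] (F^n(x_r) - F^n(x_l) - 1) - [gbar log2 gbar + (1-gbar) log2(1-gbar)] (F^n(x_r) - F^n(x_l)) + U_1 log2 U_1 + U_0 log2 U_0. -/

import Mathlib

/-!
On each of the regions `(-∞, xl]`, `(xl, xr)`, `[xr, ∞)` the posterior for `ŷ` is `(c / U) Pⁿ`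
for a constant `c`, and `(c t) log (c t) = c log c · t + c · t log t`. So `U · ∫ P log P` is
`∑ c log c · mass - U log U` plus the prior's entropy integral over each region weighted by `c`.
The weights `c` for `ŷ = 1` and `ŷ = 0` add up to `1` on every region, so these pieces sum to the
prior entropy and cancel it.
-/

open MeasureTheory Set Real

-- No sign conditions: `logb b` is `log |·| / log b` and vanishes at `0`.
lemma mul_mul_logb_mul (b c t : ℝ) :
    c * t * logb b (c * t) = c * logb b c * t + c * (t * logb b t) := by
  rcases eq_or_ne c 0 with rfl | hc
  · simp
  rcases eq_or_ne t 0 with rfl | ht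
  · simp
  rw [logb_mul hc ht]
  ring

lemma mul_div_mul_logb_div (b u : ℝ) {U : ℝ} (hU : U ≠ 0) :
    U * (u / U * logb b (u / U)) = u * logb b u - u * logb b U := by
  rcases eq_or_ne u 0 with rfl | hu
  · simp
  rw [logb_div hu hU]
  field_simp

noncomputable def step3 (a b u v w : ℝ) (x : ℝ) : ℝ :=
  if x ≤ a then u else if x < b then v else w

lemma comp_step3 (φ : ℝ → ℝ) (a b u v w x : ℝ) :
    φ (step3 a b u v w x) = step3 a b (φ u) (φ v) (φ w) x := by
  unfold step3
  split_ifs <;> rfl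

lemma step3_mul_eq_indicator {a b : ℝ} (hab : a < b) (u v w : ℝ) (f : ℝ → ℝ) (x : ℝ) :
    step3 a b u v w x * f x
      = (Iic a).indicator (fun x => u * f x) x + (Ioo a b).indicator (fun x => v * f x) x
        + (Ici b).indicator (fun x => w * f x) x := by
  simp only [step3, indicator_apply, mem_Iic, mem_Ioo, mem_Ici]
  split_ifs <;> grind

section StepIntegral

variable {μ : Measure ℝ} {f : ℝ → ℝ} {a b : ℝ}

lemma integrable_step3_mul (hf : Integrable f μ) (hab : a < b) (u v w : ℝ) :
    Integrable (fun x => step3 a b u v w x * f x) μ := by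
  simp_rw [step3_mul_eq_indicator hab]
  exact (((hf.const_mul u).indicator measurableSet_Iic).add
    ((hf.const_mul v).indicator measurableSet_Ioo)).add
    ((hf.const_mul w).indicator measurableSet_Ici)

lemma integral_step3_mul (hf : Integrable f μ) (hab : a < b) (u v w : ℝ) :
    ∫ x, step3 a b u v w x * f x ∂μ
      = u * ∫ x in Iic a, f x ∂μ + v * ∫ x in Ioo a b, f x ∂μ + w * ∫ x in Ici b, f x ∂μ := by
  have hu := (hf.const_mul u).indicator (measurableSet_Iic (a := a))
  have hv := (hf.const_mul v).indicator (measurableSet_Ioo (a := a) (b := b))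
  have hw := (hf.const_mul w).indicator (measurableSet_Ici (a := b))
  simp_rw [step3_mul_eq_indicator hab]
  have huv : Integrable (fun x => (Iic a).indicator (fun x => u * f x) x
      + (Ioo a b).indicator (fun x => v * f x) x) μ := hu.add hv
  rw [integral_add huv hw, integral_add hu hv,
    integral_indicator measurableSet_Iic, integral_indicator measurableSet_Ioo,
    integral_indicator measurableSet_Ici, integral_const_mul, integral_const_mul,
    integral_const_mul]

lemma integral_Iic_add_Ioo_add_Ici (hf : Integrable f μ) (hab : a < b) :
    ∫ x in Iic a, f x ∂μ + ∫ x in Ioo a b, f x ∂μ + ∫ x in Ici b, f x ∂μ = ∫ x, f x ∂μ := by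
  simpa [step3] using (integral_step3_mul hf hab 1 1 1).symm

lemma integral_Ioo_eq_sub [NullSingletonClass μ] (hf : Integrable f μ) (hab : a ≤ b) :
    ∫ x in Ioo a b, f x ∂μ = ∫ x in Iic b, f x ∂μ - ∫ x in Iic a, f x ∂μ := by
  rw [intervalIntegral.integral_Iic_sub_Iic hf.integrableOn hf.integrableOn,
    intervalIntegral.integral_of_le hab, integral_Ioc_eq_integral_Ioo]

lemma mul_integral_step3_div_mul_logb (β : ℝ) (hf : Integrable f μ)
    (hfl : Integrable (fun x => f x * logb β (f x)) μ) (hab : a < b) (u v w : ℝ)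
    {U : ℝ} (hU : U ≠ 0) {P : ℝ → ℝ}
    (hP : ∀ x, P x = step3 a b (u / U) (v / U) (w / U) x * f x) :
    U * ∫ x, P x * logb β (P x) ∂μ
      = u * logb β u * ∫ x in Iic a, f x ∂μ + v * logb β v * ∫ x in Ioo a b, f x ∂μ
        + w * logb β w * ∫ x in Ici b, f x ∂μ
        + (u * ∫ x in Iic a, f x * logb β (f x) ∂μ + v * ∫ x in Ioo a b, f x * logb β (f x) ∂μ
          + w * ∫ x in Ici b, f x * logb β (f x) ∂μ)
        - (u * ∫ x in Iic a, f x ∂μ + v * ∫ x in Ioo a b, f x ∂μ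
          + w * ∫ x in Ici b, f x ∂μ) * logb β U := by
  set s := step3 a b (u / U) (v / U) (w / U)
  have hsplit : ∀ x, P x * logb β (P x)
      = step3 a b (u / U * logb β (u / U)) (v / U * logb β (v / U)) (w / U * logb β (w / U)) x
          * f x + s x * (f x * logb β (f x)) := by
    intro x
    rw [hP, mul_mul_logb_mul, comp_step3 (fun c => c * logb β c)]
  simp_rw [hsplit]
  rw [integral_add (integrable_step3_mul hf hab _ _ _) (integrable_step3_mul hfl hab _ _ _),
    integral_step3_mul hf hab, integral_step3_mul hfl hab]
  have hu := mul_div_mul_logb_div β u hU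
  have hv := mul_div_mul_logb_div β v hU
  have hw := mul_div_mul_logb_div β w hU
  have hc (c : ℝ) : U * (c / U) = c := mul_div_cancel₀ c hU
  linear_combination (∫ x in Iic a, f x ∂μ) * hu + (∫ x in Ioo a b, f x ∂μ) * hv
    + (∫ x in Ici b, f x ∂μ) * hw + (∫ x in Iic a, f x * logb β (f x) ∂μ) * hc u
    + (∫ x in Ioo a b, f x * logb β (f x) ∂μ) * hc v + (∫ x in Ici b, f x * logb β (f x) ∂μ) * hc w

end StepIntegral

theorem sbes_expected_entropy_change_general
    (Pn : ℝ → ℝ) (hint : Integrable Pn)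
    (hone : ∫ x, Pn x = 1)
    (hlogint : Integrable (fun x => Pn x * Real.logb 2 (Pn x)))
    (xl xr : ℝ) (hlt : xl < xr)
    (g gbar : ℝ)
    (F : ℝ → ℝ) (hF : ∀ x, F x = ∫ t in Set.Iic x, Pn t)
    (U₁ U₀ : ℝ)
    (hU₁ : U₁ = (1 - g) * F xl + (1 - gbar) * (F xr - F xl) + g * (1 - F xr))
    (hU₀ : U₀ = g * F xl + gbar * (F xr - F xl) + (1 - g) * (1 - F xr))
    (hU₁pos : 0 < U₁) (hU₀pos : 0 < U₀)
    (P1 P0 : ℝ → ℝ)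
    (hP1 : ∀ x, P1 x = (if x ≤ xl then (1 - g) / U₁
                        else if x < xr then (1 - gbar) / U₁
                        else g / U₁) * Pn x)
    (hP0 : ∀ x, P0 x = (if x ≤ xl then g / U₀
                        else if x < xr then gbar / U₀
                        else (1 - g) / U₀) * Pn x) :
    U₁ * (-∫ x, P1 x * Real.logb 2 (P1 x))
      + U₀ * (-∫ x, P0 x * Real.logb 2 (P0 x))
      - (-∫ x, Pn x * Real.logb 2 (Pn x))
    = (g * Real.logb 2 g + (1 - g) * Real.logb 2 (1 - g)) * (F xr - F xl - 1)
      - (gbar * Real.logb 2 gbar + (1 - gbar) * Real.logb 2 (1 - gbar))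
          * (F xr - F xl)
      + U₁ * Real.logb 2 U₁ + U₀ * Real.logb 2 U₀ := by
  have hleft : ∫ x in Iic xl, Pn x = F xl := (hF xl).symm
  have hmid : ∫ x in Ioo xl xr, Pn x = F xr - F xl := by
    rw [integral_Ioo_eq_sub hint hlt.le, hF, hF]
  have hright : ∫ x in Ici xr, Pn x = 1 - F xr := by
    linarith [integral_Iic_add_Ioo_add_Ici hint hlt]
  have hlog := integral_Iic_add_Ioo_add_Ici hlogint hlt
  have h1 := mul_integral_step3_div_mul_logb 2 hint hlogint hlt _ _ _ hU₁pos.ne' hP1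
  have h0 := mul_integral_step3_div_mul_logb 2 hint hlogint hlt _ _ _ hU₀pos.ne' hP0
  rw [hleft, hmid, hright] at h1 h0
  linear_combination -h1 - h0 - hlog - logb 2 U₁ * hU₁ - logb 2 U₀ * hU₀

/-- Expected one-step entropy change formula of SBES (equation (30)): the expected
differential entropy (in bits) of the posterior minus the entropy of the prior has the
stated closed form in terms of `g`, `ḡ`, `F^n` and the normalizers `U₁`, `U₀`. -/
theorem sbes_expected_entropy_change
    (Pn : ℝ → ℝ) (hnn : ∀ x, 0 ≤ Pn x) (hint : Integrable Pn)
    (hone : ∫ x, Pn x = 1)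
    (hlogint : Integrable (fun x => Pn x * Real.logb 2 (Pn x)))
    (xl xr : ℝ) (hlt : xl < xr)
    (g gbar : ℝ) (hg : g ∈ Set.Ioo (0 : ℝ) 1) (hgbar : gbar ∈ Set.Ioo (0 : ℝ) 1)
    (F : ℝ → ℝ) (hF : ∀ x, F x = ∫ t in Set.Iic x, Pn t)
    (U₁ U₀ : ℝ)
    (hU₁ : U₁ = (1 - g) * F xl + (1 - gbar) * (F xr - F xl) + g * (1 - F xr))
    (hU₀ : U₀ = g * F xl + gbar * (F xr - F xl) + (1 - g) * (1 - F xr))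
    (hU₁pos : 0 < U₁) (hU₀pos : 0 < U₀)
    (P1 P0 : ℝ → ℝ)
    (hP1 : ∀ x, P1 x = (if x ≤ xl then (1 - g) / U₁
                        else if x < xr then (1 - gbar) / U₁
                        else g / U₁) * Pn x)
    (hP0 : ∀ x, P0 x = (if x ≤ xl then g / U₀
                        else if x < xr then gbar / U₀
                        else (1 - g) / U₀) * Pn x) :
    U₁ * (-∫ x, P1 x * Real.logb 2 (P1 x))
      + U₀ * (-∫ x, P0 x * Real.logb 2 (P0 x))
      - (-∫ x, Pn x * Real.logb 2 (Pn x))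
    = (g * Real.logb 2 g + (1 - g) * Real.logb 2 (1 - g)) * (F xr - F xl - 1)
      - (gbar * Real.logb 2 gbar + (1 - gbar) * Real.logb 2 (1 - gbar))
          * (F xr - F xl)
      + U₁ * Real.logb 2 U₁ + U₀ * Real.logb 2 U₀ :=
  sbes_expected_entropy_change_general Pn hint hone hlogint xl xr hlt g gbar F hF U₁ U₀ hU₁ hU₀
    hU₁pos hU₀pos P1 P0 hP1 hP0
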